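/- Let 𝐪 be a positive real number with 𝐪 ≠ 1, and let t, u be real numbers with t·𝐪^i ≠ 1 and u·𝐪^i ≠ 1 for every integer i ≥ 0. Let (a_{2n})_{n≥1}, (κ_{2ℓ})_{ℓ≥1}, (m_{2k})_{k≥1} be real sequences satisfying the formal power series identities exp_{𝐪^{−1/2}}[ Σ_{ℓ≥1} (κ_{2ℓ}/[ℓ]_𝐪) 𝐪^{ℓ−1/2} z^{2ℓ} ] = 1 + Σ_{n≥1} a_{2n} ((1−𝐪)^{2n}/((t;𝐪)_n (u;𝐪)_n)) 𝐪^{n²−3n/2} z^{2n} and exp_{𝐪^{−1/2}}[ ((1−t)/(1−𝐪)) Σ_{k≥1} (m_{2k}/[k]_𝐪) z^{2k} ] = 1 + Σ_{n≥1} a_{2n} z^{2n} in ℝ[[z]], where the 𝐪^{−1/2}-composition exp_{𝐪^{−1/2}}[·] is used. Then for every k ≥ 1: m_{2k} = 𝐪^{1/2} · [z^0] ( 𝐪·Δ_{𝐪;t,u} T_{𝐪^{−1/2}} + 𝐪^{1/2}·*_g T_{𝐪^{−1/2}} )^{2k−1} ( g(z) ), where g(z) := Σ_{ℓ≥1} κ_{2ℓ}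 z^{2ℓ−1}, T_{𝐪^{−1/2}} is the substitution operator (T_{𝐪^{−1/2}} f)(z) := f(𝐪^{−1/2} z), *_g is multiplication by g(z), [z^0] f is the constant term of f, and Δ_{𝐪;t,u} is the unique linear operator on ℝ[[z]] with Δ_{𝐪;t,u} z^{2n+1} = ((1 − u𝐪^n)/(1−𝐪)) z^{2n} for n ≥ 0, Δ_{𝐪;t,u} z^{2n} = ((1 − t𝐪^n)/(1−𝐪)) z^{2n−1} for n ≥ 1, and Δ_{𝐪;t,u} 1 = 0. -/

import Mathlib

open Finset

/-- The `𝐩`-number `[n]_𝐩 = (1-𝐩^n)/(1-𝐩)`. -/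
noncomputable def qNum (p : ℝ) (n : ℕ) : ℝ := (1 - p ^ n) / (1 - p)

/-- The `𝐩`-factorial `n!_𝐩 = [1]_𝐩 ⋯ [n]_𝐩`. -/
noncomputable def qFact (p : ℝ) (n : ℕ) : ℝ := ∏ i ∈ Finset.Icc 1 n, qNum p i

/-- The `𝐩`-Pochhammer symbol `(t;𝐩)_n = Π_{i=0}^{n-1} (1 - t𝐩^i)`. -/
noncomputable def qPoch (p t : ℝ) (n : ℕ) : ℝ := ∏ i ∈ Finset.range n, (1 - t * p ^ i)

/-- The `𝐩`-derivative `D_𝐩` on `ℝ[[z]]`: `D_𝐩 z^n = [n]_𝐩 z^{n-1}`. -/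
noncomputable def qDeriv (p : ℝ) (f : PowerSeries ℝ) : PowerSeries ℝ :=
  PowerSeries.mk fun j => qNum p (j + 1) * PowerSeries.coeff (j + 1) f

/-- The `𝐩`-antiderivative (with zero constant term): the unique `F` with zero constant
term and `D_𝐩 F = g` (when all `[j]_𝐩 ≠ 0`). -/
noncomputable def qInteg (p : ℝ) (g : PowerSeries ℝ) : PowerSeries ℝ :=
  PowerSeries.mk fun j => if j = 0 then 0 else PowerSeries.coeff (j - 1) g / qNum p j

/-- The `𝐩`-symbolic powers `f^{𝐩;[k]}`: `f^{𝐩;[0]} = 1` and `f^{𝐩;[k]}` is the series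
with zero constant term satisfying `D_𝐩 f^{𝐩;[k]} = [k]_𝐩 f^{𝐩;[k-1]} D_𝐩 f`. -/
noncomputable def qSymbPow (p : ℝ) (f : PowerSeries ℝ) : ℕ → PowerSeries ℝ
  | 0 => 1
  | k + 1 => qInteg p (qNum p (k + 1) • (qSymbPow p f k * qDeriv p f))

/-- The `𝐩`-exponential composition `exp_𝐩[f] = Σ_{n≥0} f^{𝐩;[n]}/n!_𝐩`, for `f` with zero
constant term (then `f^{𝐩;[n]}` has no terms of degree `< n`, so the sum makes sense). -/
noncomputable def qExpComp (p : ℝ) (f : PowerSeries ℝ) : PowerSeries ℝ :=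
  PowerSeries.mk fun j =>
    ∑ n ∈ Finset.range (j + 1), PowerSeries.coeff j (qSymbPow p f n) / qFact p n


/-- The series `g(z) = Σ_{ℓ≥1} κ_{2ℓ} z^{2ℓ-1}` (where `κ ℓ` stands for `κ_{2ℓ}`). -/
noncomputable def gSeries (κ : ℕ → ℝ) : PowerSeries ℝ :=
  PowerSeries.mk fun j => if j % 2 = 1 then κ ((j + 1) / 2) else 0

/-- The argument `Σ_{ℓ≥1} (κ_{2ℓ}/[ℓ]_qq) qq^{ℓ-1/2} z^{2ℓ}` of the first exponential. -/
noncomputable def qCumulantArg (qq : ℝ) (κ : ℕ → ℝ) : PowerSeries ℝ :=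
  PowerSeries.mk fun j =>
    if j ≠ 0 ∧ j % 2 = 0 then κ (j / 2) / qNum qq (j / 2) * qq ^ (j / 2) / Real.sqrt qq else 0

/-- The series `1 + Σ_{n≥1} a_{2n} ((1-qq)^{2n}/((t;qq)_n (u;qq)_n)) qq^{n²-3n/2} z^{2n}`
(where `a n` stands for `a_{2n}` and `qq^{n²-3n/2} = qq^{n²}/(√qq)^{3n}`). -/
noncomputable def qCoeffSeriesTU (qq t u : ℝ) (a : ℕ → ℝ) : PowerSeries ℝ :=
  PowerSeries.mk fun j =>
    if j = 0 then 1
    else if j % 2 = 0 then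
      a (j / 2) * ((1 - qq) ^ j / (qPoch qq t (j / 2) * qPoch qq u (j / 2))) *
        (qq ^ ((j / 2) ^ 2) / Real.sqrt qq ^ (3 * (j / 2)))
    else 0

/-- The argument `((1-t)/(1-qq)) Σ_{k≥1} (m_{2k}/[k]_qq) z^{2k}` of the second exponential. -/
noncomputable def qMomentArg (qq t : ℝ) (m : ℕ → ℝ) : PowerSeries ℝ :=
  PowerSeries.mk fun j =>
    if j ≠ 0 ∧ j % 2 = 0 then (1 - t) / (1 - qq) * (m (j / 2) / qNum qq (j / 2)) else 0

/-- The series `1 + Σ_{n≥1} a_{2n} z^{2n}`. -/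
noncomputable def qCoeffSeries (a : ℕ → ℝ) : PowerSeries ℝ :=
  PowerSeries.mk fun j =>
    if j = 0 then 1 else if j % 2 = 0 then a (j / 2) else 0

/-- The operator `Δ_{qq;t,u}` on `ℝ[[z]]`: `Δ z^{2n+1} = ((1-uqq^n)/(1-qq)) z^{2n}` for `n ≥ 0`,
`Δ z^{2n} = ((1-tqq^n)/(1-qq)) z^{2n-1}` for `n ≥ 1`, and `Δ 1 = 0`. -/
noncomputable def DeltaQTU (qq t u : ℝ) (f : PowerSeries ℝ) : PowerSeries ℝ :=
  PowerSeries.mk fun j =>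
    if j % 2 = 0 then (1 - u * qq ^ (j / 2)) / (1 - qq) * PowerSeries.coeff (j + 1) f
    else (1 - t * qq ^ ((j + 1) / 2)) / (1 - qq) * PowerSeries.coeff (j + 1) f

/-!
Write `qq = s²`, so that the composition parameter is `s⁻¹` and `T_{qq^{-1/2}} = rescale s⁻¹`.
Since `D_p exp_p[F] = D_p F · exp_p[F]`, the two hypotheses become `s⁻¹`-difference equations:
`E := qCoeffSeriesTU` satisfies `D_{s⁻¹} E = (1 + s) g E`, while `qCoeffSeries a` satisfies the same
kind of equation with `g` replaced by a multiple of `T (Σ_k m_k z^{2k-1})`, i.e. a triangular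
recurrence that determines the `m_k` from the `a_n`.

The equation for `E` says that multiplication by `E` intertwines `Op = qq Δ T + s g T` with its
lowering part `qq Δ T : z^{i+1} ↦ w_i z^i`, up to a term in `f(0)`:
`[z^i] (E · Op f) = w_i [z^{i+1}] (E f) - c E_{i+1} f(0)`.
Iterating this, `Σ_{c+j=r} qq^j a_j [z^0] Op^{2c} f = (w_0 ⋯ w_{2r-1}) [z^{2r}] (E f)` (with
`a_0 = 1`), and at `f = 1` the normalisation of `qCoeffSeriesTU` turns this into the recurrence
satisfied by the `m_k`, with `[z^0] Op^{2k} 1` in place of `m_k`. Finally `Op 1 = s g`.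
-/

open PowerSeries

section QCalculus

variable {p : ℝ}

lemma qNum_ne_zero (hp : 0 < p) (hp1 : p ≠ 1) {n : ℕ} (hn : n ≠ 0) : qNum p n ≠ 0 := by
  have hpn : p ^ n ≠ 1 := by
    rcases hp1.lt_or_gt with h | h
    · exact (pow_lt_one₀ hp.le h hn).ne
    · exact (one_lt_pow₀ h hn).ne'
  exact div_ne_zero (sub_ne_zero.mpr hpn.symm) (sub_ne_zero.mpr hp1.symm)

lemma qFact_succ (n : ℕ) : qFact p (n + 1) = qFact p n * qNum p (n + 1) :=
  Finset.prod_Icc_succ_top (Nat.le_add_left 1 n) _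

@[simp]
lemma coeff_qDeriv (f : PowerSeries ℝ) (j : ℕ) :
    coeff j (qDeriv p f) = qNum p (j + 1) * coeff (j + 1) f :=
  coeff_mk _ _

variable (p) in
noncomputable def qDerivLinear : PowerSeries ℝ →ₗ[ℝ] PowerSeries ℝ where
  toFun := qDeriv p
  map_add' f g := by ext j; simp [mul_add]
  map_smul' c f := by ext j; simp; ring

lemma qDeriv_qInteg (hp : 0 < p) (hp1 : p ≠ 1) (g : PowerSeries ℝ) :
    qDeriv p (qInteg p g) = g := by
  ext j
  simp [qInteg, mul_div_cancel₀ _ (qNum_ne_zero hp hp1 j.succ_ne_zero)]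

lemma qDeriv_qSymbPow_succ (hp : 0 < p) (hp1 : p ≠ 1) (f : PowerSeries ℝ) (n : ℕ) :
    qDeriv p (qSymbPow p f (n + 1)) = qNum p (n + 1) • (qSymbPow p f n * qDeriv p f) :=
  qDeriv_qInteg hp hp1 _

lemma coeff_qSymbPow_of_lt (f : PowerSeries ℝ) {n j : ℕ} (hj : j < n) :
    coeff j (qSymbPow p f n) = 0 := by
  induction n generalizing j with
  | zero => omega
  | succ n ih =>
    obtain _ | j := j
    · simp [qSymbPow, qInteg]
    · have hprod : coeff j (qSymbPow p f n * qDeriv p f) = 0 := by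
        rw [coeff_mul]
        exact Finset.sum_eq_zero fun x hx => by
          rw [ih (by have := Finset.HasAntidiagonal.antidiagonal.fst_le hx; omega), zero_mul]
      simp [qSymbPow, qInteg, hprod]

variable (p) in
noncomputable def qExpPartial (f : PowerSeries ℝ) (N : ℕ) : PowerSeries ℝ :=
  ∑ n ∈ Finset.range (N + 1), (qFact p n)⁻¹ • qSymbPow p f n

lemma coeff_qExpComp_eq_coeff_qExpPartial (f : PowerSeries ℝ) {j N : ℕ} (hj : j ≤ N) :
    coeff j (qExpComp p f) = coeff j (qExpPartial p f N) := by
  rw [qExpComp, coeff_mk, qExpPartial, map_sum]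
  refine Finset.sum_subset (Finset.range_subset_range.mpr (by omega)) (fun n _ hn => ?_) |>.trans
    (Finset.sum_congr rfl fun n _ => ?_)
  · simp [coeff_qSymbPow_of_lt f (show j < n by simp at hn; omega)]
  · simp [div_eq_inv_mul]

lemma qDeriv_qExpPartial_succ (hp : 0 < p) (hp1 : p ≠ 1) (f : PowerSeries ℝ) (N : ℕ) :
    qDeriv p (qExpPartial p f (N + 1)) = qExpPartial p f N * qDeriv p f := by
  change qDerivLinear p _ = _
  rw [qExpPartial, map_sum, Finset.sum_range_succ', qExpPartial, Finset.sum_mul]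
  have hconst : qDerivLinear p ((qFact p 0)⁻¹ • qSymbPow p f 0) = 0 := by
    ext j; simp [qDerivLinear, qSymbPow, coeff_one]
  rw [hconst, add_zero]
  refine Finset.sum_congr rfl fun n _ => ?_
  rw [map_smul]
  change _ • qDeriv p _ = _
  rw [qDeriv_qSymbPow_succ hp hp1, smul_smul, qFact_succ, smul_mul_assoc,
    mul_inv, inv_mul_cancel_right₀ (qNum_ne_zero hp hp1 n.succ_ne_zero)]

theorem qDeriv_qExpComp (hp : 0 < p) (hp1 : p ≠ 1) (f : PowerSeries ℝ) :
    qDeriv p (qExpComp p f) = qDeriv p f * qExpComp p f := by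
  ext j
  rw [coeff_qDeriv, coeff_qExpComp_eq_coeff_qExpPartial f le_rfl, ← coeff_qDeriv,
    qDeriv_qExpPartial_succ hp hp1, mul_comm, coeff_mul, coeff_mul]
  refine Finset.sum_congr rfl fun x hx => ?_
  rw [coeff_qExpComp_eq_coeff_qExpPartial f (Finset.HasAntidiagonal.antidiagonal.snd_le hx)]

end QCalculus

section PowerSeriesLemmas

lemma sum_antidiagonal_coeff_mul_coeff_succ (E h : PowerSeries ℝ) (i : ℕ) :
    ∑ x ∈ antidiagonal i, coeff x.1 E * coeff (x.2 + 1) h =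
      coeff (i + 1) (E * h) - coeff (i + 1) E * constantCoeff h := by
  rw [coeff_mul, Finset.Nat.sum_antidiagonal_succ', coeff_zero_eq_constantCoeff_apply]
  ring

lemma sum_antidiagonal_coeff_succ_mul_coeff (E h : PowerSeries ℝ) (i : ℕ) :
    ∑ x ∈ antidiagonal i, coeff (x.1 + 1) E * coeff x.2 h =
      coeff (i + 1) (E * h) - constantCoeff E * coeff (i + 1) h := by
  rw [coeff_mul, Finset.Nat.sum_antidiagonal_succ, coeff_zero_eq_constantCoeff_apply]
  ring

lemma coeff_two_mul_add_one_mul_of_odd {F : PowerSeries ℝ} (hF : ∀ n, coeff (2 * n) F = 0)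
    (G : PowerSeries ℝ) (n : ℕ) :
    coeff (2 * n + 1) (F * G) =
      ∑ x ∈ antidiagonal n, coeff (2 * x.1 + 1) F * coeff (2 * x.2) G := by
  let e : ℕ × ℕ ↪ ℕ × ℕ :=
    ⟨fun x => (2 * x.1 + 1, 2 * x.2), fun x y h => by simp only [Prod.mk.injEq] at h; ext <;> omega⟩
  rw [coeff_mul, ← Finset.sum_subset (s₁ := (antidiagonal n).map e), Finset.sum_map]
  · rfl
  · intro x hx
    obtain ⟨y, hy, rfl⟩ := Finset.mem_map.mp hx
    rw [Finset.HasAntidiagonal.mem_antidiagonal] at hy ⊢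
    change 2 * y.1 + 1 + 2 * y.2 = 2 * n + 1
    omega
  · rintro ⟨x, y⟩ hxy hx
    rw [Finset.HasAntidiagonal.mem_antidiagonal] at hxy
    obtain ⟨l, rfl | rfl⟩ := Nat.even_or_odd' x
    · rw [hF, zero_mul]
    · obtain ⟨j, rfl⟩ : ∃ j, y = 2 * j := ⟨n - l, by omega⟩
      exact absurd (Finset.mem_map.mpr
        ⟨(l, j), Finset.HasAntidiagonal.mem_antidiagonal.mpr (by omega), rfl⟩) hx

lemma eq_of_sum_antidiagonal_mul_eq {x y b : ℕ → ℝ} (hb : b 0 ≠ 0)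
    (h : ∀ n, ∑ p ∈ antidiagonal n, x p.1 * b p.2 = ∑ p ∈ antidiagonal n, y p.1 * b p.2) :
    x = y := by
  have hB : PowerSeries.mk b ≠ 0 := fun h0 => hb (by simpa using congrArg (coeff 0) h0)
  have hmul : PowerSeries.mk x * PowerSeries.mk b = PowerSeries.mk y * PowerSeries.mk b := by
    ext n
    simpa [coeff_mul] using h n
  funext n
  simpa using congrArg (coeff n) (mul_right_cancel₀ hB hmul)

end PowerSeriesLemmas

section Coefficients

@[simp]
lemma coeff_gSeries_two_mul (κ : ℕ → ℝ) (n : ℕ) : coeff (2 * n) (gSeries κ) = 0 := by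
  simp [gSeries]

@[simp]
lemma coeff_gSeries_two_mul_add_one (κ : ℕ → ℝ) (n : ℕ) :
    coeff (2 * n + 1) (gSeries κ) = κ (n + 1) := by
  simp [gSeries, Nat.add_mod, show (2 * n + 1 + 1) / 2 = n + 1 by omega]

@[simp]
lemma coeff_qCoeffSeries_two_mul_add_two (a : ℕ → ℝ) (n : ℕ) :
    coeff (2 * n + 2) (qCoeffSeries a) = a (n + 1) := by
  simp [qCoeffSeries, show (2 * n + 2) / 2 = n + 1 by omega]

@[simp]
lemma constantCoeff_qCoeffSeries (a : ℕ → ℝ) : constantCoeff (qCoeffSeries a) = 1 := by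
  simp [qCoeffSeries, ← coeff_zero_eq_constantCoeff_apply]

@[simp]
lemma coeff_qCoeffSeriesTU_two_mul_add_one (q t u : ℝ) (a : ℕ → ℝ) (n : ℕ) :
    coeff (2 * n + 1) (qCoeffSeriesTU q t u a) = 0 := by
  simp [qCoeffSeriesTU, Nat.add_mod]

@[simp]
lemma constantCoeff_qCoeffSeriesTU (q t u : ℝ) (a : ℕ → ℝ) :
    constantCoeff (qCoeffSeriesTU q t u a) = 1 := by
  simp [qCoeffSeriesTU, ← coeff_zero_eq_constantCoeff_apply]

end Coefficients

noncomputable def cumulantScale (s t u : ℝ) (n : ℕ) : ℝ :=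
  (1 - s ^ 2) ^ (2 * n) / (qPoch (s ^ 2) t n * qPoch (s ^ 2) u n) *
    ((s ^ 2) ^ (n ^ 2) / s ^ (3 * n))

section SquareParameter

variable {s : ℝ}

lemma one_sub_sq_ne_zero (hs : 0 < s) (hs1 : s ≠ 1) : 1 - s ^ 2 ≠ 0 := by
  rw [sub_ne_zero, ne_comm, Ne, pow_eq_one_iff_of_nonneg hs.le two_ne_zero]
  exact hs1

lemma coeff_qCoeffSeriesTU_two_mul (hs : 0 < s) (t u : ℝ) (a : ℕ → ℝ) {n : ℕ} (hn : n ≠ 0) :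
    coeff (2 * n) (qCoeffSeriesTU (s ^ 2) t u a) = a n * cumulantScale s t u n := by
  simp [qCoeffSeriesTU, cumulantScale, hn, Real.sqrt_sq hs.le, mul_assoc]

lemma qNum_inv_two_mul_add_two (hs : 0 < s) (hs1 : s ≠ 1) (j : ℕ) :
    qNum s⁻¹ (2 * j + 2) = (1 + s) * (s⁻¹) ^ (2 * j + 1) * qNum (s ^ 2) (j + 1) := by
  have h2 := one_sub_sq_ne_zero hs hs1
  simp only [qNum, inv_pow]
  field_simp
  ring

lemma qNum_sq_ne_zero (hs : 0 < s) (hs1 : s ≠ 1) (j : ℕ) : qNum (s ^ 2) (j + 1) ≠ 0 :=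
  qNum_ne_zero (by positivity) (by rwa [Ne, pow_eq_one_iff_of_nonneg hs.le two_ne_zero])
    j.succ_ne_zero

lemma qDeriv_qCumulantArg (hs : 0 < s) (hs1 : s ≠ 1) (κ : ℕ → ℝ) :
    qDeriv s⁻¹ (qCumulantArg (s ^ 2) κ) = (1 + s) • gSeries κ := by
  ext j
  obtain ⟨n, rfl | rfl⟩ := Nat.even_or_odd' j
  · simp [qCumulantArg, Nat.add_mod]
  · have hq := qNum_sq_ne_zero hs hs1 n
    rw [coeff_qDeriv, qCumulantArg, coeff_mk, if_pos ⟨by omega, by omega⟩,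
      show (2 * n + 1 + 1) / 2 = n + 1 by omega, Real.sqrt_sq hs.le,
      qNum_inv_two_mul_add_two hs hs1, coeff_smul, coeff_gSeries_two_mul_add_one]
    simp only [inv_pow, smul_eq_mul]
    field_simp
    ring

lemma qDeriv_qMomentArg (hs : 0 < s) (hs1 : s ≠ 1) (t : ℝ) (m : ℕ → ℝ) :
    qDeriv s⁻¹ (qMomentArg (s ^ 2) t m) =
      ((1 + s) * (1 - t) / (1 - s ^ 2)) • rescale s⁻¹ (gSeries m) := by
  ext j
  obtain ⟨n, rfl | rfl⟩ := Nat.even_or_odd' j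
  · simp [qMomentArg, Nat.add_mod]
  · have hq := qNum_sq_ne_zero hs hs1 n
    rw [coeff_qDeriv, qMomentArg, coeff_mk, if_pos ⟨by omega, by omega⟩,
      show (2 * n + 1 + 1) / 2 = n + 1 by omega, qNum_inv_two_mul_add_two hs hs1,
      coeff_smul, coeff_rescale, coeff_gSeries_two_mul_add_one]
    simp only [inv_pow, smul_eq_mul]
    field_simp

theorem moment_recurrence_of_qExpComp (hs : 0 < s) (hs1 : s ≠ 1) {t : ℝ} {a m : ℕ → ℝ}
    (h : qExpComp s⁻¹ (qMomentArg (s ^ 2) t m) = qCoeffSeries a) (n : ℕ) :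
    (1 - t) * ∑ x ∈ antidiagonal n,
        m (x.1 + 1) * ((s ^ 2) ^ x.2 * coeff (2 * x.2) (qCoeffSeries a)) =
      (1 - (s ^ 2) ^ (n + 1)) * a (n + 1) := by
  have h2 := one_sub_sq_ne_zero hs hs1
  have hcoeff := congrArg (coeff (2 * n + 1))
    (qDeriv_qExpComp (inv_pos.mpr hs) (inv_ne_one.mpr hs1) (qMomentArg (s ^ 2) t m))
  rw [h, qDeriv_qMomentArg hs hs1, smul_mul_assoc, coeff_smul,
    coeff_two_mul_add_one_mul_of_odd (by simp [coeff_rescale]), coeff_qDeriv,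
    coeff_qCoeffSeries_two_mul_add_two, show 2 * n + 1 + 1 = 2 * n + 2 by ring,
    qNum_inv_two_mul_add_two hs hs1] at hcoeff
  have hterm : ∀ x ∈ antidiagonal n,
      m (x.1 + 1) * ((s ^ 2) ^ x.2 * coeff (2 * x.2) (qCoeffSeries a)) =
        s ^ (2 * n + 1) * (coeff (2 * x.1 + 1) (rescale s⁻¹ (gSeries m)) *
          coeff (2 * x.2) (qCoeffSeries a)) := by
    intro x hx
    obtain rfl := Finset.HasAntidiagonal.mem_antidiagonal.mp hx
    rw [coeff_rescale, coeff_gSeries_two_mul_add_one]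
    simp only [inv_pow]
    field_simp
    ring
  rw [Finset.sum_congr rfl hterm, ← Finset.mul_sum]
  rw [qNum, smul_eq_mul] at hcoeff
  linear_combination (norm := skip) (-s ^ (2 * n + 1) * (1 - s ^ 2) / (1 + s)) * hcoeff
  simp only [inv_pow]
  field_simp
  ring

end SquareParameter

section MomentOperator

variable {s t u : ℝ} {κ : ℕ → ℝ} {E : PowerSeries ℝ}

lemma DeltaQTU_add (q t u : ℝ) (f g : PowerSeries ℝ) :
    DeltaQTU q t u (f + g) = DeltaQTU q t u f + DeltaQTU q t u g := by
  ext j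
  simp only [DeltaQTU, coeff_mk, map_add]
  split_ifs <;> ring

lemma DeltaQTU_smul (q t u c : ℝ) (f : PowerSeries ℝ) :
    DeltaQTU q t u (c • f) = c • DeltaQTU q t u f := by
  ext j
  simp only [DeltaQTU, coeff_mk, coeff_smul, smul_eq_mul]
  split_ifs <;> ring

lemma DeltaQTU_one (q t u : ℝ) : DeltaQTU q t u 1 = 0 := by
  ext j
  simp [DeltaQTU, coeff_one]

variable (s t u κ) in
noncomputable def momentOp : PowerSeries ℝ →ₗ[ℝ] PowerSeries ℝ where
  toFun f := s ^ 2 • DeltaQTU (s ^ 2) t u (rescale s⁻¹ f) + s • (gSeries κ * rescale s⁻¹ f)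
  map_add' f g := by
    rw [map_add, DeltaQTU_add, mul_add]
    module
  map_smul' c f := by
    have hT : rescale s⁻¹ (c • f) = c • rescale s⁻¹ f := by
      ext n; simp only [coeff_rescale, coeff_smul, smul_eq_mul]; ring
    rw [hT, DeltaQTU_smul, mul_smul_comm, RingHom.id_apply]
    module

variable (s t u κ) in
lemma coe_momentOp :
    ⇑(momentOp s t u κ) = fun f =>
      s ^ 2 • DeltaQTU (s ^ 2) t u (rescale s⁻¹ f) + s • (gSeries κ * rescale s⁻¹ f) :=
  rfl

variable (s t u κ) in
lemma momentOp_one : momentOp s t u κ 1 = s • gSeries κ := by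
  simp only [coe_momentOp, map_one, DeltaQTU_one, smul_zero, zero_add, mul_one]

variable (s t u) in
noncomputable def loweringWeight (i : ℕ) : ℝ :=
  s ^ 2 / (1 - s ^ 2) * ((s⁻¹) ^ (i + 1) - if i % 2 = 0 then u * s⁻¹ else t)

lemma loweringWeight_two_mul (n : ℕ) :
    loweringWeight s t u (2 * n) = s ^ 2 / (1 - s ^ 2) * ((s⁻¹) ^ (2 * n + 1) - u * s⁻¹) := by
  simp [loweringWeight]

lemma loweringWeight_two_mul_add_one (n : ℕ) :
    loweringWeight s t u (2 * n + 1) = s ^ 2 / (1 - s ^ 2) * ((s⁻¹) ^ (2 * n + 2) - t) := by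
  simp [loweringWeight, Nat.add_mod]

lemma coeff_smul_DeltaQTU_rescale (hs : s ≠ 0) (f : PowerSeries ℝ) (i : ℕ) :
    coeff i (s ^ 2 • DeltaQTU (s ^ 2) t u (rescale s⁻¹ f)) =
      loweringWeight s t u i * coeff (i + 1) f := by
  obtain ⟨n, rfl | rfl⟩ := Nat.even_or_odd' i
  · simp [DeltaQTU, loweringWeight, coeff_rescale]
    field_simp
    ring
  · simp [DeltaQTU, loweringWeight, coeff_rescale, Nat.add_mod,
      show (2 * n + 1 + 1) / 2 = n + 1 by omega]
    field_simp
    ring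

lemma coeff_mul_smul_DeltaQTU_rescale (hs : s ≠ 0) (hE : ∀ n, coeff (2 * n + 1) E = 0)
    (f : PowerSeries ℝ) (i : ℕ) :
    coeff i (E * (s ^ 2 • DeltaQTU (s ^ 2) t u (rescale s⁻¹ f))) =
      s ^ 2 / (1 - s ^ 2) * (coeff (i + 1) (E * rescale s⁻¹ f)
        - (if i % 2 = 0 then u * s⁻¹ else t) * coeff (i + 1) (E * f)
        - (1 - t) * coeff (i + 1) E * constantCoeff f) := by
  set θ : ℕ → ℝ := fun i => if i % 2 = 0 then u * s⁻¹ else t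
  have hparity : ∀ j y, coeff j E * θ y = coeff j E * θ (j + y) := by
    intro j y
    obtain ⟨l, rfl | rfl⟩ := Nat.even_or_odd' j
    · simp [θ, Nat.add_mod]
    · rw [hE, zero_mul, zero_mul]
  have hlast : coeff (i + 1) E * θ i = coeff (i + 1) E * t := by
    obtain ⟨n, rfl | rfl⟩ := Nat.even_or_odd' i
    · rw [hE, zero_mul, zero_mul]
    · simp [θ, Nat.add_mod]
  have hterm : ∀ x ∈ antidiagonal i,
      coeff x.1 E * coeff x.2 (s ^ 2 • DeltaQTU (s ^ 2) t u (rescale s⁻¹ f)) =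
        s ^ 2 / (1 - s ^ 2) * (coeff x.1 E * coeff (x.2 + 1) (rescale s⁻¹ f)
          - θ i * (coeff x.1 E * coeff (x.2 + 1) f)) := by
    intro x hx
    have hθ := hparity x.1 x.2
    rw [Finset.HasAntidiagonal.mem_antidiagonal.mp hx] at hθ
    rw [coeff_smul_DeltaQTU_rescale hs, loweringWeight, coeff_rescale]
    linear_combination (-(s ^ 2 / (1 - s ^ 2)) * coeff (x.2 + 1) f) * hθ
  rw [coeff_mul, Finset.sum_congr rfl hterm, ← Finset.mul_sum, Finset.sum_sub_distrib,
    ← Finset.mul_sum, sum_antidiagonal_coeff_mul_coeff_succ,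
    sum_antidiagonal_coeff_mul_coeff_succ, ← coeff_zero_eq_constantCoeff_apply, coeff_rescale,
    pow_zero, one_mul, coeff_zero_eq_constantCoeff_apply]
  linear_combination (s ^ 2 / (1 - s ^ 2) * constantCoeff f) * hlast

lemma coeff_mul_gSeries_mul_rescale (hs : 0 < s) (hs1 : s ≠ 1) (hE0 : constantCoeff E = 1)
    (hE : qDeriv s⁻¹ E = (1 + s) • (gSeries κ * E)) (f : PowerSeries ℝ) (i : ℕ) :
    s * coeff i (E * (gSeries κ * rescale s⁻¹ f)) =
      s ^ 2 / (1 - s ^ 2) * ((s⁻¹) ^ (i + 1) * coeff (i + 1) (E * f)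
        - coeff (i + 1) (E * rescale s⁻¹ f)) := by
  have h2 := one_sub_sq_ne_zero hs hs1
  have hgE : ∀ j, s * coeff j (gSeries κ * E) =
      s ^ 2 / (1 - s ^ 2) * ((s⁻¹) ^ (j + 1) - 1) * coeff (j + 1) E := by
    intro j
    have h := congrArg (coeff j) hE
    rw [coeff_qDeriv, coeff_smul, smul_eq_mul, qNum] at h
    simp only [inv_pow] at h ⊢
    field_simp at h ⊢
    linear_combination h
  have hterm : ∀ x ∈ antidiagonal i,
      s * (coeff x.1 (gSeries κ * E) * coeff x.2 (rescale s⁻¹ f)) =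
        s ^ 2 / (1 - s ^ 2) * ((s⁻¹) ^ (i + 1) * (coeff (x.1 + 1) E * coeff x.2 f)
          - coeff (x.1 + 1) E * coeff x.2 (rescale s⁻¹ f)) := by
    intro x hx
    obtain rfl := Finset.HasAntidiagonal.mem_antidiagonal.mp hx
    rw [← mul_assoc, hgE, coeff_rescale]
    ring
  rw [show E * (gSeries κ * rescale s⁻¹ f) = gSeries κ * E * rescale s⁻¹ f by ring, coeff_mul,
    Finset.mul_sum, Finset.sum_congr rfl hterm, ← Finset.mul_sum, Finset.sum_sub_distrib,
    ← Finset.mul_sum, sum_antidiagonal_coeff_succ_mul_coeff,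
    sum_antidiagonal_coeff_succ_mul_coeff, hE0, coeff_rescale]
  ring

theorem coeff_mul_momentOp (hs : 0 < s) (hs1 : s ≠ 1) (hE0 : constantCoeff E = 1)
    (hEodd : ∀ n, coeff (2 * n + 1) E = 0) (hE : qDeriv s⁻¹ E = (1 + s) • (gSeries κ * E))
    (f : PowerSeries ℝ) (i : ℕ) :
    coeff i (E * momentOp s t u κ f) =
      loweringWeight s t u i * coeff (i + 1) (E * f)
        - s ^ 2 * (1 - t) / (1 - s ^ 2) * coeff (i + 1) E * constantCoeff f := by
  simp only [coe_momentOp]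
  rw [mul_add, map_add, coeff_mul_smul_DeltaQTU_rescale hs.ne' hEodd, mul_smul_comm,
    coeff_smul, smul_eq_mul, coeff_mul_gSeries_mul_rescale hs hs1 hE0 hE, loweringWeight]
  ring

end MomentOperator

theorem sum_antidiagonal_constantCoeff_iterate_mul {L : PowerSeries ℝ → PowerSeries ℝ}
    {E : PowerSeries ℝ} {w : ℕ → ℝ} {c : ℝ} {b : ℕ → ℝ} (hE0 : constantCoeff E = 1)
    (hEodd : ∀ n, coeff (2 * n + 1) E = 0)
    (hL : ∀ f i, coeff i (E * L f) =
      w i * coeff (i + 1) (E * f) - c * coeff (i + 1) E * constantCoeff f)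
    (hb0 : b 0 = 1)
    (hb : ∀ r, b (r + 1) = c * coeff (2 * r + 2) E * ∏ i ∈ Finset.range (2 * r + 1), w i)
    (r : ℕ) (f : PowerSeries ℝ) :
    ∑ x ∈ antidiagonal r, constantCoeff (L^[2 * x.1] f) * b x.2 =
      (∏ i ∈ Finset.range (2 * r), w i) * coeff (2 * r) (E * f) := by
  induction r generalizing f with
  | zero => simp [hb0, hE0]
  | succ r ih =>
    have hstep : ∀ x : ℕ × ℕ, L^[2 * (x.1 + 1)] f = L^[2 * x.1] (L (L f)) := fun x => by
      rw [show 2 * (x.1 + 1) = 2 * x.1 + 1 + 1 by ring, Function.iterate_succ_apply,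
        Function.iterate_succ_apply]
    rw [Finset.Nat.sum_antidiagonal_succ]
    simp only [hstep]
    rw [ih, hL, hL, hEodd, hb, show 2 * (r + 1) = 2 * r + 1 + 1 by ring,
      Function.iterate_zero_apply]
    simp only [Finset.prod_range_succ]
    ring

section Normalization

variable {s t u : ℝ}

lemma qPoch_succ (p x : ℝ) (n : ℕ) : qPoch p x (n + 1) = qPoch p x n * (1 - x * p ^ n) :=
  Finset.prod_range_succ _ n

lemma cumulantScale_succ (n : ℕ) :
    cumulantScale s t u (n + 1) = cumulantScale s t u n *
      ((1 - s ^ 2) ^ 2 * (s ^ 2) ^ (2 * n + 1) /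
        ((1 - t * (s ^ 2) ^ n) * (1 - u * (s ^ 2) ^ n) * s ^ 3)) := by
  simp only [cumulantScale, qPoch_succ, div_eq_mul_inv, mul_inv]
  ring

variable (hs : 0 < s) (hs1 : s ≠ 1) (ht : ∀ i : ℕ, t * (s ^ 2) ^ i ≠ 1)
  (hu : ∀ i : ℕ, u * (s ^ 2) ^ i ≠ 1)
include hs hs1 ht hu

lemma cumulantScale_mul_prod_loweringWeight (n : ℕ) :
    (1 - t) * cumulantScale s t u n * ∏ i ∈ Finset.range (2 * n), loweringWeight s t u i =
      1 - t * (s ^ 2) ^ n := by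
  have h2 := one_sub_sq_ne_zero hs hs1
  induction n with
  | zero => simp [cumulantScale, qPoch]
  | succ n ih =>
    have htn : 1 - t * (s ^ 2) ^ n ≠ 0 := sub_ne_zero.mpr (ht n).symm
    have hun : 1 - (s ^ 2) ^ n * u ≠ 0 := sub_ne_zero.mpr (by rw [mul_comm]; exact (hu n).symm)
    rw [show 2 * (n + 1) = 2 * n + 1 + 1 by ring, Finset.prod_range_succ, Finset.prod_range_succ,
      cumulantScale_succ]
    calc _ = ((1 - t) * cumulantScale s t u n *
            ∏ i ∈ Finset.range (2 * n), loweringWeight s t u i) *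
          ((1 - s ^ 2) ^ 2 * (s ^ 2) ^ (2 * n + 1) /
            ((1 - t * (s ^ 2) ^ n) * (1 - u * (s ^ 2) ^ n) * s ^ 3) *
          loweringWeight s t u (2 * n) * loweringWeight s t u (2 * n + 1)) := by ring
      _ = _ := by
        rw [ih, loweringWeight_two_mul, loweringWeight_two_mul_add_one]
        simp only [inv_pow]
        field_simp
        ring

lemma cumulantScale_succ_mul_prod_loweringWeight (n : ℕ) :
    s ^ 2 * (1 - t) / (1 - s ^ 2) * cumulantScale s t u (n + 1) *
        ∏ i ∈ Finset.range (2 * n + 1), loweringWeight s t u i = (s ^ 2) ^ (n + 1) := by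
  have h := cumulantScale_mul_prod_loweringWeight hs hs1 ht hu (n + 1)
  rw [show 2 * (n + 1) = 2 * n + 1 + 1 by ring, Finset.prod_range_succ,
    loweringWeight_two_mul_add_one] at h
  apply mul_right_cancel₀ (sub_ne_zero.mpr (ht (n + 1)).symm)
  linear_combination (norm := skip) (s ^ 2) ^ (n + 1) * h
  simp only [inv_pow]
  field_simp
  ring

theorem moment_recurrence_momentOp {κ a : ℕ → ℝ}
    (h : qExpComp s⁻¹ (qCumulantArg (s ^ 2) κ) = qCoeffSeriesTU (s ^ 2) t u a) (n : ℕ) :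
    (1 - t) * ∑ x ∈ antidiagonal n,
        constantCoeff ((momentOp s t u κ)^[2 * (x.1 + 1)] 1) *
          ((s ^ 2) ^ x.2 * coeff (2 * x.2) (qCoeffSeries a)) =
      (1 - (s ^ 2) ^ (n + 1)) * a (n + 1) := by
  have hE : qDeriv s⁻¹ (qCoeffSeriesTU (s ^ 2) t u a) =
      (1 + s) • (gSeries κ * qCoeffSeriesTU (s ^ 2) t u a) := by
    rw [← h, qDeriv_qExpComp (inv_pos.mpr hs) (inv_ne_one.mpr hs1), qDeriv_qCumulantArg hs hs1,
      smul_mul_assoc]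
  have hb : ∀ r, (s ^ 2) ^ (r + 1) * coeff (2 * (r + 1)) (qCoeffSeries a) =
      s ^ 2 * (1 - t) / (1 - s ^ 2) * coeff (2 * r + 2) (qCoeffSeriesTU (s ^ 2) t u a) *
        ∏ i ∈ Finset.range (2 * r + 1), loweringWeight s t u i := by
    intro r
    rw [show 2 * r + 2 = 2 * (r + 1) by ring,
      coeff_qCoeffSeriesTU_two_mul hs t u a (n := r + 1) (by omega),
      show 2 * (r + 1) = 2 * r + 2 by ring, coeff_qCoeffSeries_two_mul_add_two,
      ← cumulantScale_succ_mul_prod_loweringWeight hs hs1 ht hu r]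
    ring
  have hsum := sum_antidiagonal_constantCoeff_iterate_mul (constantCoeff_qCoeffSeriesTU _ t u a)
    (coeff_qCoeffSeriesTU_two_mul_add_one _ t u a) (coeff_mul_momentOp hs hs1
      (constantCoeff_qCoeffSeriesTU _ t u a) (coeff_qCoeffSeriesTU_two_mul_add_one _ t u a) hE)
    (b := fun j => (s ^ 2) ^ j * coeff (2 * j) (qCoeffSeries a)) (by simp) hb (n + 1) 1
  have hnorm := cumulantScale_mul_prod_loweringWeight hs hs1 ht hu (n + 1)
  rw [mul_one, Finset.Nat.sum_antidiagonal_succ,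
    coeff_qCoeffSeriesTU_two_mul hs t u a (n := n + 1) (by omega)] at hsum
  dsimp only at hsum
  rw [mul_zero, Function.iterate_zero_apply, map_one, one_mul,
    show 2 * (n + 1) = 2 * n + 2 by ring, coeff_qCoeffSeries_two_mul_add_two] at hsum
  rw [show 2 * (n + 1) = 2 * n + 2 by ring] at hnorm
  linear_combination (1 - t) * hsum + a (n + 1) * hnorm

end Normalization

/-- Theorem 6.1(a): the `qq`-analogue of the operator formula for moments:
`m_{2k} = qq^{1/2} [z^0] (qq Δ_{qq;t,u} T_{qq^{-1/2}} + qq^{1/2} *_g T_{qq^{-1/2}})^{2k-1} g(z)`,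
where `T_{qq^{-1/2}} f(z) = f(qq^{-1/2} z)` is implemented by `PowerSeries.rescale`. -/
theorem q_moments_via_operator (qq t u : ℝ) (hqq : 0 < qq) (hqq1 : qq ≠ 1)
    (ht : ∀ i : ℕ, t * qq ^ i ≠ 1) (hu : ∀ i : ℕ, u * qq ^ i ≠ 1)
    (a κ m : ℕ → ℝ)
    (h1 : qExpComp (Real.sqrt qq)⁻¹ (qCumulantArg qq κ) = qCoeffSeriesTU qq t u a)
    (h2 : qExpComp (Real.sqrt qq)⁻¹ (qMomentArg qq t m) = qCoeffSeries a) :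
    ∀ k : ℕ, 1 ≤ k →
      m k = Real.sqrt qq * PowerSeries.constantCoeff
        ((fun f => qq • DeltaQTU qq t u (PowerSeries.rescale (Real.sqrt qq)⁻¹ f) +
            Real.sqrt qq • (gSeries κ * PowerSeries.rescale (Real.sqrt qq)⁻¹ f))^[2 * k - 1]
          (gSeries κ)) := by
  obtain ⟨s, hs, rfl⟩ : ∃ s : ℝ, 0 < s ∧ s ^ 2 = qq :=
    ⟨Real.sqrt qq, Real.sqrt_pos.mpr hqq, Real.sq_sqrt hqq.le⟩
  have hs1 : s ≠ 1 := by rintro rfl; exact hqq1 (one_pow 2)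
  rw [Real.sqrt_sq hs.le] at h1 h2 ⊢
  have ht1 : 1 - t ≠ 0 := sub_ne_zero.mpr (by simpa using (ht 0).symm)
  have hmoments : (fun c => m (c + 1)) =
      fun c => constantCoeff ((momentOp s t u κ)^[2 * (c + 1)] 1) :=
    eq_of_sum_antidiagonal_mul_eq (b := fun j => (s ^ 2) ^ j * coeff (2 * j) (qCoeffSeries a))
      (by simp) fun n => mul_left_cancel₀ ht1 ((moment_recurrence_of_qExpComp hs hs1 h2 n).trans
        (moment_recurrence_momentOp hs hs1 ht hu h1 n).symm)
  intro k hk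
  obtain ⟨k, rfl⟩ := Nat.exists_eq_add_of_le' hk
  rw [congrFun hmoments k, show 2 * (k + 1) = 2 * (k + 1) - 1 + 1 by omega,
    Function.iterate_succ_apply, momentOp_one, ← Module.End.pow_apply, map_smul,
    Module.End.pow_apply, coe_momentOp, Nat.add_sub_cancel, ← coeff_zero_eq_constantCoeff_apply,
    ← coeff_zero_eq_constantCoeff_apply, coeff_smul, smul_eq_mul]
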